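/- arXiv:1101.0147 — 2 statements merged into one kernel-verified Lean document; each statement's English description precedes it below -/
import Mathlib

section
/- Let 0 < d ≤ n and let K be a d-set in ℝⁿ with associated mass distribution μ_K. Then ∫_K |x − y|^{−u} dμ_K(x) ≈ ∫₀^{diam K} r^{d−u−1} dr, with equivalence constants independent of y ∈ K and of u ≥ 0. -/
/-!
By Tonelli, `∫ |x - y|^{-u} dμ(x) = ∫₀^∞ u r^{-u-1} μ(B(y, r)) dr` for `u > 0`. For `y ∈ K` the
`d`-set bounds, propagated from scales `r ≤ 1` to all scales, give `μ(B(y, r)) ≍ min(r, D)^d` with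
`D = diam K`, and `∫₀^∞ u r^{-u-1} min(r, D)^d dr = u ∫₀^D r^{d-u-1} dr + D^{d-u}`, which is
exactly `d ∫₀^D r^{d-u-1} dr` (both sides are infinite when `u ≥ d`). For `u = 0` the integral is
the total mass, which is `≍ D^d`.
-/

open MeasureTheory Metric Set

noncomputable section

/-- `K` is a `d`-set in `ℝⁿ` with associated mass distribution `μ`. -/
def IsDSet {n : ℕ} (d : ℝ) (μ : Measure (EuclideanSpace ℝ (Fin n)))
    (K : Set (EuclideanSpace ℝ (Fin n))) : Prop :=
  IsCompact K ∧ μ Kᶜ = 0 ∧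
    (∀ F : Set (EuclideanSpace ℝ (Fin n)), IsClosed F → μ Fᶜ = 0 → K ⊆ F) ∧
    0 < μ Set.univ ∧ μ Set.univ < ⊤ ∧
    ∃ c₁ c₂ : ℝ, 0 < c₁ ∧ 0 < c₂ ∧ ∀ r : ℝ, r ∈ Set.Ioc (0 : ℝ) 1 → ∀ x ∈ K,
      ENNReal.ofReal (c₁ * r ^ d) ≤ μ (Metric.closedBall x r) ∧
        μ (Metric.closedBall x r) ≤ ENNReal.ofReal (c₂ * r ^ d)

/-- The graph `Γ(f) = {(x, f(x)) : x ∈ K} ⊆ ℝ^{n+1}` of a function `f` on `K ⊆ ℝⁿ`. -/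
def graphOn {n : ℕ} (K : Set (EuclideanSpace ℝ (Fin n))) (f : EuclideanSpace ℝ (Fin n) → ℝ) :
    Set (EuclideanSpace ℝ (Fin (n + 1))) :=
  (fun x => (EuclideanSpace.equiv (Fin (n + 1)) ℝ).symm
      (Fin.snoc (EuclideanSpace.equiv (Fin n) ℝ x) (f x))) '' K

open Topology

section RealIntegrals

theorem lintegral_ofReal_eq_top_of_not_integrable {α : Type*} [MeasurableSpace α] {μ : Measure α}
    {f : α → ℝ} (hf : AEStronglyMeasurable f μ) (hf₀ : 0 ≤ᵐ[μ] f) (h : ¬ Integrable f μ) :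
    ∫⁻ x, ENNReal.ofReal (f x) ∂μ = ⊤ := by
  by_contra hne
  exact h ⟨hf, (hasFiniteIntegral_iff_ofReal hf₀).2 (lt_top_iff_ne_top.2 hne)⟩

variable {a : ℝ}

theorem rpow_nonneg_ae_restrict_Ioi {c : ℝ} (hc : 0 ≤ c) :
    0 ≤ᵐ[volume.restrict (Ioi c)] fun r : ℝ => r ^ a := by
  filter_upwards [ae_restrict_mem measurableSet_Ioi] with r hr
  exact Real.rpow_nonneg (hc.trans hr.le) a

theorem lintegral_Ioo_rpow_of_neg_one_lt {D : ℝ} (hD : 0 < D) (ha : -1 < a) :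
    ∫⁻ r in Ioo 0 D, ENNReal.ofReal (r ^ a) = ENNReal.ofReal (D ^ (a + 1) / (a + 1)) := by
  rw [← ofReal_integral_eq_lintegral_ofReal ((intervalIntegral.integrableOn_Ioo_rpow_iff hD).2 ha),
    ← integral_Ioc_eq_integral_Ioo, ← intervalIntegral.integral_of_le hD.le,
    integral_rpow (Or.inl ha), Real.zero_rpow (by linarith), sub_zero]
  filter_upwards [ae_restrict_mem measurableSet_Ioo] with r hr
  exact Real.rpow_nonneg hr.1.le a

theorem lintegral_Ioo_rpow_of_le_neg_one {D : ℝ} (hD : 0 < D) (ha : a ≤ -1) :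
    ∫⁻ r in Ioo 0 D, ENNReal.ofReal (r ^ a) = ⊤ := by
  refine lintegral_ofReal_eq_top_of_not_integrable (by fun_prop) ?_
    fun h => ha.not_gt ((intervalIntegral.integrableOn_Ioo_rpow_iff hD).1 h)
  filter_upwards [ae_restrict_mem measurableSet_Ioo] with r hr
  exact Real.rpow_nonneg hr.1.le a

theorem lintegral_Ioi_zero_rpow : ∫⁻ r in Ioi 0, ENNReal.ofReal (r ^ a) = ⊤ :=
  lintegral_ofReal_eq_top_of_not_integrable (by fun_prop) (rpow_nonneg_ae_restrict_Ioi le_rfl)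
    (not_integrableOn_Ioi_rpow a)

theorem lintegral_Ioi_rpow_of_lt_neg_one {c : ℝ} (hc : 0 < c) (ha : a < -1) :
    ∫⁻ r in Ioi c, ENNReal.ofReal (r ^ a) = ENNReal.ofReal (-c ^ (a + 1) / (a + 1)) := by
  rw [← ofReal_integral_eq_lintegral_ofReal (integrableOn_Ioi_rpow_of_lt ha hc)
    (rpow_nonneg_ae_restrict_Ioi hc.le), integral_Ioi_rpow_of_lt ha hc]

theorem lintegral_Ioi_mul_rpow_neg_sub_one {u c : ℝ} (hu : 0 < u) (hc : 0 < c) :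
    ∫⁻ r in Ioi c, ENNReal.ofReal (u * r ^ (-u - 1)) = ENNReal.ofReal (c ^ (-u)) := by
  simp_rw [ENNReal.ofReal_mul hu.le]
  rw [lintegral_const_mul' _ _ ENNReal.ofReal_ne_top,
    lintegral_Ioi_rpow_of_lt_neg_one hc (by linarith), ← ENNReal.ofReal_mul hu.le]
  congr 1
  rw [show -u - 1 + 1 = -u by ring]
  field_simp

theorem ofReal_rpow_neg_eq_lintegral_indicator {s u : ℝ} (hs : 0 ≤ s) (hu : 0 < u) :
    ENNReal.ofReal s ^ (-u) =
      ∫⁻ r in Ioi 0, (Ici s).indicator (fun r => ENNReal.ofReal (u * r ^ (-u - 1))) r := by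
  rw [lintegral_indicator measurableSet_Ici, Measure.restrict_restrict measurableSet_Ici]
  rcases hs.eq_or_lt with rfl | hs
  · simp_rw [inter_eq_right.2 Ioi_subset_Ici_self, ENNReal.ofReal_mul hu.le]
    rw [lintegral_const_mul' _ _ ENNReal.ofReal_ne_top, lintegral_Ioi_zero_rpow,
      ENNReal.mul_top (ENNReal.ofReal_pos.2 hu).ne', ENNReal.ofReal_zero,
      ENNReal.zero_rpow_of_neg (by linarith)]
  · rw [inter_eq_left.2 (Ici_subset_Ioi.2 hs), ← restrict_Ioi_eq_restrict_Ici,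
      lintegral_Ioi_mul_rpow_neg_sub_one hu hs, ENNReal.ofReal_rpow_of_pos hs]

end RealIntegrals

theorem lintegral_rpow_neg_dist_eq_lintegral_measure_closedBall {X : Type*} [PseudoMetricSpace X]
    [MeasurableSpace X] [OpensMeasurableSpace X] (ν : Measure X) [SFinite ν] (y : X) {u : ℝ}
    (hu : 0 < u) :
    ∫⁻ x, ENNReal.ofReal (dist x y) ^ (-u) ∂ν =
      ∫⁻ r in Ioi 0, ν (closedBall y r) * ENNReal.ofReal (u * r ^ (-u - 1)) := by
  set g : ℝ → ENNReal := fun r => ENNReal.ofReal (u * r ^ (-u - 1))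
  have hmeas : Measurable (Function.uncurry fun x r => (Ici (dist x y)).indicator g r) := by
    have : (Function.uncurry fun x r => (Ici (dist x y)).indicator g r) =
        {p : X × ℝ | dist p.1 y ≤ p.2}.indicator (g ∘ Prod.snd) := by
      ext ⟨x, r⟩
      simp [indicator]
    rw [this]
    exact (by fun_prop : Measurable (g ∘ Prod.snd)).indicator
      (measurableSet_le (by fun_prop) measurable_snd)
  calc ∫⁻ x, ENNReal.ofReal (dist x y) ^ (-u) ∂ν
      = ∫⁻ x, (∫⁻ r in Ioi 0, (Ici (dist x y)).indicator g r) ∂ν :=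
        lintegral_congr fun x => ofReal_rpow_neg_eq_lintegral_indicator dist_nonneg hu
    _ = ∫⁻ r in Ioi 0, ∫⁻ x, (closedBall y r).indicator (fun _ => g r) x ∂ν := by
        rw [lintegral_lintegral_swap hmeas.aemeasurable]
        -- `r ∈ Ici (dist x y)` and `x ∈ closedBall y r` both unfold to `dist x y ≤ r`
        rfl
    _ = _ := by simp only [lintegral_indicator_const measurableSet_closedBall, g, mul_comm]

theorem lintegral_min_rpow_mul_rpow_neg_sub_one {d D u : ℝ} (hd : 0 < d) (hD : 0 < D)
    (hu : 0 < u) :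
    ∫⁻ r in Ioi 0, ENNReal.ofReal (min r D ^ d) * ENNReal.ofReal (u * r ^ (-u - 1)) =
      ENNReal.ofReal d * ∫⁻ r in Ioo 0 D, ENNReal.ofReal (r ^ (d - u - 1)) := by
  have h_near : ∫⁻ r in Ioc 0 D, ENNReal.ofReal (min r D ^ d) * ENNReal.ofReal (u * r ^ (-u - 1))
      = ENNReal.ofReal u * ∫⁻ r in Ioo 0 D, ENNReal.ofReal (r ^ (d - u - 1)) := by
    rw [restrict_Ioo_eq_restrict_Ioc, ← lintegral_const_mul' _ _ ENNReal.ofReal_ne_top]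
    refine setLIntegral_congr_fun measurableSet_Ioc fun r hr => ?_
    rw [min_eq_left hr.2, ← ENNReal.ofReal_mul (Real.rpow_nonneg hr.1.le d),
      ← ENNReal.ofReal_mul hu.le, mul_left_comm, ← Real.rpow_add hr.1]
    ring_nf
  have h_far : ∫⁻ r in Ioi D, ENNReal.ofReal (min r D ^ d) * ENNReal.ofReal (u * r ^ (-u - 1))
      = ENNReal.ofReal (D ^ (d - u)) := by
    rw [setLIntegral_congr_fun measurableSet_Ioi fun r (hr : D < r) => by rw [min_eq_right hr.le],
      lintegral_const_mul' _ _ ENNReal.ofReal_ne_top, lintegral_Ioi_mul_rpow_neg_sub_one hu hD,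
      ← ENNReal.ofReal_mul (Real.rpow_nonneg hD.le d), ← Real.rpow_add hD, sub_eq_add_neg]
  rw [← Ioc_union_Ioi_eq_Ioi hD.le, lintegral_union measurableSet_Ioi Ioc_disjoint_Ioi_same,
    h_near, h_far]
  rcases lt_or_ge u d with hud | hud
  · have hdu : 0 < d - u := sub_pos.2 hud
    rw [lintegral_Ioo_rpow_of_neg_one_lt hD (by linarith), sub_add_cancel,
      ← ENNReal.ofReal_mul hu.le, ← ENNReal.ofReal_add (by positivity) (by positivity),
      ← ENNReal.ofReal_mul hd.le]
    congr 1
    field_simp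
    ring
  · rw [lintegral_Ioo_rpow_of_le_neg_one hD (by linarith), ENNReal.mul_top (by positivity),
      ENNReal.mul_top (by positivity), top_add]

section BallBounds

variable {X : Type*} [PseudoMetricSpace X] [MeasurableSpace X] [OpensMeasurableSpace X]
  {ν : Measure X} [SFinite ν] {y : X} {a b d D u : ℝ}

theorem le_lintegral_rpow_neg_dist (hd : 0 < d) (hD : 0 < D) (hu : 0 ≤ u)
    (hν : ∀ r > 0, ENNReal.ofReal (a * min r D ^ d) ≤ ν (closedBall y r)) :
    ENNReal.ofReal (a * d) * ∫⁻ r in Ioo 0 D, ENNReal.ofReal (r ^ (d - u - 1)) ≤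
      ∫⁻ x, ENNReal.ofReal (dist x y) ^ (-u) ∂ν := by
  rcases hu.eq_or_lt with rfl | hu
  · calc ENNReal.ofReal (a * d) * ∫⁻ r in Ioo 0 D, ENNReal.ofReal (r ^ (d - 0 - 1))
        = ENNReal.ofReal (a * min D D ^ d) := by
          rw [lintegral_Ioo_rpow_of_neg_one_lt hD (by linarith), sub_zero, sub_add_cancel,
            ← ENNReal.ofReal_mul' (by positivity), min_self]
          field_simp
      _ ≤ ν (closedBall y D) := hν D hD
      _ ≤ ν univ := measure_mono (subset_univ _)
      _ = ∫⁻ x, ENNReal.ofReal (dist x y) ^ (-0 : ℝ) ∂ν := by simp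
  · rw [lintegral_rpow_neg_dist_eq_lintegral_measure_closedBall ν y hu,
      ENNReal.ofReal_mul' hd.le, mul_assoc, ← lintegral_min_rpow_mul_rpow_neg_sub_one hd hD hu,
      ← lintegral_const_mul' _ _ ENNReal.ofReal_ne_top]
    refine setLIntegral_mono' measurableSet_Ioi fun r (hr : 0 < r) => ?_
    rw [← mul_assoc, ← ENNReal.ofReal_mul' (Real.rpow_nonneg (le_min hr.le hD.le) d)]
    exact mul_le_mul_left (hν r hr) _

theorem lintegral_rpow_neg_dist_le (hd : 0 < d) (hD : 0 < D) (hb : 0 ≤ b) (hu : 0 ≤ u)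
    (hν : ∀ r > 0, ν (closedBall y r) ≤ ENNReal.ofReal (b * min r D ^ d)) :
    ∫⁻ x, ENNReal.ofReal (dist x y) ^ (-u) ∂ν ≤
      ENNReal.ofReal (b * d) * ∫⁻ r in Ioo 0 D, ENNReal.ofReal (r ^ (d - u - 1)) := by
  rcases hu.eq_or_lt with rfl | hu
  · calc ∫⁻ x, ENNReal.ofReal (dist x y) ^ (-0 : ℝ) ∂ν
        = ν univ := by simp
      _ ≤ ENNReal.ofReal (b * D ^ d) := by
          rw [← iUnion_closedBall_nat y,
            Monotone.measure_iUnion fun m n h => closedBall_subset_closedBall (Nat.cast_le.2 h)]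
          refine iSup_le fun n => (measure_mono (closedBall_subset_closedBall
            (le_add_of_nonneg_right zero_le_one))).trans ((hν (n + 1) (by positivity)).trans ?_)
          gcongr
          exact min_le_right _ _
      _ = ENNReal.ofReal (b * d) * ∫⁻ r in Ioo 0 D, ENNReal.ofReal (r ^ (d - 0 - 1)) := by
          rw [lintegral_Ioo_rpow_of_neg_one_lt hD (by linarith), sub_zero, sub_add_cancel,
            ← ENNReal.ofReal_mul' (by positivity)]
          field_simp
  · rw [lintegral_rpow_neg_dist_eq_lintegral_measure_closedBall ν y hu,
      ENNReal.ofReal_mul' hd.le, mul_assoc, ← lintegral_min_rpow_mul_rpow_neg_sub_one hd hD hu,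
      ← lintegral_const_mul' _ _ ENNReal.ofReal_ne_top]
    refine setLIntegral_mono' measurableSet_Ioi fun r (hr : 0 < r) => ?_
    rw [← mul_assoc, ← ENNReal.ofReal_mul' (Real.rpow_nonneg (le_min hr.le hD.le) d)]
    exact mul_le_mul_left (hν r hr) _

end BallBounds

namespace IsDSet

variable {n : ℕ} {d : ℝ} {μ : Measure (EuclideanSpace ℝ (Fin n))}
  {K : Set (EuclideanSpace ℝ (Fin n))} {y : EuclideanSpace ℝ (Fin n)} (hK : IsDSet d μ K)
include hK

theorem restrict_eq : μ.restrict K = μ :=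
  Measure.restrict_eq_self_of_ae_mem hK.2.1

theorem isFiniteMeasure : IsFiniteMeasure μ :=
  ⟨hK.2.2.2.2.1⟩

theorem nonempty : K.Nonempty := by
  rw [nonempty_iff_ne_empty]
  rintro rfl
  exact hK.2.2.2.1.ne' (by simpa using hK.2.1)

theorem measure_closedBall_of_diam_le (hy : y ∈ K) {r : ℝ} (hr : diam K ≤ r) :
    μ (closedBall y r) = μ univ := by
  have hsub : K ⊆ closedBall y r := fun x hx =>
    mem_closedBall.2 ((dist_le_diam_of_mem hK.1.isBounded hx hy).trans hr)
  exact measure_congr (ae_eq_univ.2 (measure_mono_null (compl_subset_compl.2 hsub) hK.2.1))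

theorem measure_closedBall_min_diam (hy : y ∈ K) (r : ℝ) :
    μ (closedBall y (min r (diam K))) = μ (closedBall y r) := by
  rcases le_total r (diam K) with hr | hr
  · rw [min_eq_left hr]
  · rw [min_eq_right hr, hK.measure_closedBall_of_diam_le hy le_rfl,
      hK.measure_closedBall_of_diam_le hy hr]

theorem exists_measure_closedBall_le (hd : 0 < d) :
    ∃ b > 0, ∀ y ∈ K, ∀ r > 0, μ (closedBall y r) ≤ ENNReal.ofReal (b * r ^ d) := by
  obtain ⟨-, -, -, -, hfin, _, c₂, -, hc₂, hball⟩ := hK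
  refine ⟨max c₂ (μ univ).toReal, lt_max_of_lt_left hc₂, fun y hy r hr => ?_⟩
  rcases le_or_gt r 1 with hr1 | hr1
  · refine (hball r ⟨hr, hr1⟩ y hy).2.trans (ENNReal.ofReal_le_ofReal ?_)
    gcongr
    exact le_max_left _ _
  · calc μ (closedBall y r) ≤ μ univ := measure_mono (subset_univ _)
      _ = ENNReal.ofReal ((μ univ).toReal * 1) := by rw [mul_one, ENNReal.ofReal_toReal hfin.ne]
      _ ≤ ENNReal.ofReal (max c₂ (μ univ).toReal * r ^ d) := by
        gcongr
        · exact le_max_right _ _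
        · exact Real.one_le_rpow hr1.le hd.le

theorem diam_pos (hd : 0 < d) : 0 < diam K := by
  obtain ⟨b, -, hball⟩ := hK.exists_measure_closedBall_le hd
  obtain ⟨y, hy⟩ := hK.nonempty
  by_contra! hK0
  have hle : ∀ r > 0, μ univ ≤ ENNReal.ofReal (b * r ^ d) := fun r hr => by
    rw [← hK.measure_closedBall_of_diam_le hy (hK0.trans hr.le)]
    exact hball y hy r hr
  have hlim : Filter.Tendsto (fun r : ℝ => ENNReal.ofReal (b * r ^ d)) (𝓝[>] 0) (𝓝 0) := by
    have h : Filter.Tendsto (fun r : ℝ => b * r ^ d) (𝓝 0) (𝓝 (b * 0 ^ d)) :=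
      (continuousAt_const.mul (Real.continuousAt_rpow_const 0 d (Or.inr hd.le))).tendsto
    rw [Real.zero_rpow hd.ne', mul_zero] at h
    simpa using (ENNReal.tendsto_ofReal h).mono_left nhdsWithin_le_nhds
  exact hK.2.2.2.1.ne' (le_antisymm (ge_of_tendsto hlim (eventually_nhdsWithin_of_forall hle))
    bot_le)

theorem exists_closedBall_bounds (hd : 0 < d) :
    ∃ a b : ℝ, 0 < a ∧ 0 < b ∧ ∀ y ∈ K, ∀ r > 0,
      ENNReal.ofReal (a * min r (diam K) ^ d) ≤ μ (closedBall y r) ∧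
        μ (closedBall y r) ≤ ENNReal.ofReal (b * min r (diam K) ^ d) := by
  obtain ⟨b, hb, hle⟩ := hK.exists_measure_closedBall_le hd
  obtain ⟨c₁, _, hc₁, -, hball⟩ := hK.2.2.2.2.2
  set D := diam K
  refine ⟨c₁ / max 1 D ^ d, b, by positivity, hb, fun y hy r hr => ?_⟩
  rw [← hK.measure_closedBall_min_diam hy r]
  have hs : 0 < min r D := lt_min hr (hK.diam_pos hd)
  refine ⟨?_, hle y hy _ hs⟩
  calc ENNReal.ofReal (c₁ / max 1 D ^ d * min r D ^ d)
      = ENNReal.ofReal (c₁ * (min r D / max 1 D) ^ d) := by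
        rw [Real.div_rpow hs.le (by positivity)]
        ring_nf
    _ ≤ ENNReal.ofReal (c₁ * min (min r D) 1 ^ d) := by
        gcongr
        exact le_min (div_le_self hs.le (le_max_left _ _))
          ((div_le_one (by positivity)).2 ((min_le_right _ _).trans (le_max_right _ _)))
    _ ≤ μ (closedBall y (min (min r D) 1)) :=
        (hball _ ⟨lt_min hs one_pos, min_le_right _ _⟩ y hy).1
    _ ≤ μ (closedBall y (min r D)) := measure_mono (closedBall_subset_closedBall (min_le_left _ _))

end IsDSet

theorem lintegral_rpow_neg_dist_dSet_equiv_general {n : ℕ} (d : ℝ) (hd0 : 0 < d)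
    (μ : Measure (EuclideanSpace ℝ (Fin n))) (K : Set (EuclideanSpace ℝ (Fin n)))
    (hK : IsDSet d μ K) :
    ∃ C₁ C₂ : ℝ, 0 < C₁ ∧ 0 < C₂ ∧ ∀ y ∈ K, ∀ u : ℝ, 0 ≤ u →
      ENNReal.ofReal C₁ * ∫⁻ r in Set.Ioo 0 (Metric.diam K), ENNReal.ofReal (r ^ (d - u - 1))
          ≤ ∫⁻ x in K, ENNReal.ofReal (dist x y) ^ (-u) ∂μ ∧
        ∫⁻ x in K, ENNReal.ofReal (dist x y) ^ (-u) ∂μ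
          ≤ ENNReal.ofReal C₂ *
            ∫⁻ r in Set.Ioo 0 (Metric.diam K), ENNReal.ofReal (r ^ (d - u - 1)) := by
  obtain ⟨a, b, ha, hb, hball⟩ := hK.exists_closedBall_bounds hd0
  have := hK.isFiniteMeasure
  refine ⟨a * d, b * d, by positivity, by positivity, fun y hy u hu => ?_⟩
  rw [hK.restrict_eq]
  exact ⟨le_lintegral_rpow_neg_dist hd0 (hK.diam_pos hd0) hu fun r hr => (hball y hy r hr).1,
    lintegral_rpow_neg_dist_le hd0 (hK.diam_pos hd0) hb.le hu fun r hr => (hball y hy r hr).2⟩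

/-- For a `d`-set `K` in `ℝⁿ` with mass distribution `μ`,
`∫_K |x-y|^{-u} dμ(x) ≈ ∫₀^{diam K} r^{d-u-1} dr`, with equivalence constants independent of
`y ∈ K` and of `u ≥ 0`. -/
theorem lintegral_rpow_neg_dist_dSet_equiv {n : ℕ} (d : ℝ) (hd0 : 0 < d) (hdn : d ≤ n)
    (μ : Measure (EuclideanSpace ℝ (Fin n))) (K : Set (EuclideanSpace ℝ (Fin n)))
    (hK : IsDSet d μ K) :
    ∃ C₁ C₂ : ℝ, 0 < C₁ ∧ 0 < C₂ ∧ ∀ y ∈ K, ∀ u : ℝ, 0 ≤ u →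
      ENNReal.ofReal C₁ * ∫⁻ r in Set.Ioo 0 (Metric.diam K), ENNReal.ofReal (r ^ (d - u - 1))
          ≤ ∫⁻ x in K, ENNReal.ofReal (dist x y) ^ (-u) ∂μ ∧
        ∫⁻ x in K, ENNReal.ofReal (dist x y) ^ (-u) ∂μ
          ≤ ENNReal.ofReal C₂ *
            ∫⁻ r in Set.Ioo 0 (Metric.diam K), ENNReal.ofReal (r ^ (d - u - 1)) :=
  lintegral_rpow_neg_dist_dSet_equiv_general d hd0 μ K hK

end
end

section
/- Let 0 < s ≤ 1 and let K be a d-set in ℝⁿ with 0 < d ≤ n. If f : K → ℝ is Hölder continuous of exponent s, then the upper box counting dimension of the graph Γ(f) ⊆ ℝ^{n+1} satisfies ͞dim_B Γ(f) ≤ d/s. -/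
open MeasureTheory Metric Set

noncomputable section

/-- The dyadic `N`-cube of side length `2^{-j}` centered at `2^{-j} m`, `m ∈ ℤᴺ`. -/
def dyadicCube (N j : ℕ) (m : Fin N → ℤ) : Set (EuclideanSpace ℝ (Fin N)) :=
  {x | ∀ i, |x i - (2 : ℝ) ^ (-(j : ℤ)) * (m i : ℝ)| ≤ (2 : ℝ) ^ (-(j : ℤ)) / 2}

/-- The number of dyadic cubes of side length `2^{-j}` (centered at the points `2^{-j}m`,
`m ∈ ℤᴺ`) which intersect `E`. -/
noncomputable def boxCount {N : ℕ} (E : Set (EuclideanSpace ℝ (Fin N))) (j : ℕ) : ℕ :=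
  Set.ncard {m : Fin N → ℤ | (dyadicCube N j m ∩ E).Nonempty}

/-- The upper box counting dimension `limsup_j log₂(N_j(E))/j` of a set `E`. -/
noncomputable def upperBoxDim {N : ℕ} (E : Set (EuclideanSpace ℝ (Fin N))) : ℝ :=
  Filter.limsup (fun j : ℕ => Real.logb 2 (boxCount E j) / j) Filter.atTop

/-!
Cover `K` by the `N_{j'}(K)` dyadic cubes of side `2^{-j'}`, where `j' = ⌈j/s⌉`. Balls of radius
`2^{-j'}` centred in distinct cubes overlap at most `4ⁿ` times, so the lower mass bound
`μ(B_r(x)) ≥ c₁ rᵈ` gives `N_{j'}(K) ≲ 2^{j'd} ≲ 2^{jd/s}`. Over each of these cubes `f` oscillates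
by `O(2^{-j's}) = O(2^{-j})`, so the part of the graph above it meets a bounded number of cubes of
side `2^{-j}`. Hence `N_j(Γ(f)) ≲ 2^{jd/s}`.
-/

open Filter ENNReal

lemma dist_le_sqrt_card_mul_of_abs_sub_le {N : ℕ} {x y : EuclideanSpace ℝ (Fin N)} {r : ℝ}
    (hr : 0 ≤ r) (h : ∀ i, |x i - y i| ≤ r) : dist x y ≤ √N * r := by
  rw [EuclideanSpace.dist_eq, ← Real.sqrt_sq hr, ← Real.sqrt_mul (Nat.cast_nonneg N)]
  refine Real.sqrt_le_sqrt ?_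
  calc ∑ i, dist (x i) (y i) ^ 2 ≤ ∑ _i : Fin N, r ^ 2 :=
        Finset.sum_le_sum fun i _ =>
          pow_le_pow_left₀ dist_nonneg ((Real.dist_eq _ _).trans_le (h i)) 2
    _ = N * r ^ 2 := by simp

lemma inv_two_pow_rpow (j : ℕ) (d : ℝ) : ((2 : ℝ) ^ j)⁻¹ ^ d = (2 ^ (j * d))⁻¹ := by
  rw [Real.inv_rpow (by positivity), ← Real.rpow_natCast, ← Real.rpow_mul zero_le_two]

def latticeBox {N : ℕ} (t : Fin N → ℝ) (r : ℝ) : Finset (Fin N → ℤ) :=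
  Fintype.piFinset fun i => Finset.Icc ⌈t i - r⌉ ⌊t i + r⌋

lemma mem_latticeBox {N : ℕ} {t : Fin N → ℝ} {r : ℝ} {m : Fin N → ℤ} :
    m ∈ latticeBox t r ↔ ∀ i, |(m i : ℝ) - t i| ≤ r := by
  simp only [latticeBox, Fintype.mem_piFinset, Finset.mem_Icc, Int.ceil_le, Int.le_floor,
    abs_sub_le_iff]
  refine forall_congr' fun i => ?_
  constructor <;> rintro ⟨h₁, h₂⟩ <;> constructor <;> linarith

lemma card_latticeBox_le {N : ℕ} (t : Fin N → ℝ) {r : ℝ} {A : ℕ} (hA : 2 * r ≤ A) :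
    (latticeBox t r).card ≤ (A + 1) ^ N := by
  rw [latticeBox, Fintype.card_piFinset]
  refine (Finset.prod_le_pow_card _ _ (A + 1) fun i _ => ?_).trans_eq (by simp)
  have hlength : (⌊t i + r⌋ - ⌈t i - r⌉ : ℝ) ≤ A := by
    linarith [Int.floor_le (t i + r), Int.le_ceil (t i - r)]
  have : ⌊t i + r⌋ - ⌈t i - r⌉ ≤ (A : ℤ) := by exact_mod_cast hlength
  rw [Int.card_Icc, Int.toNat_le]
  push_cast
  omega

lemma mem_dyadicCube_iff {N j : ℕ} {m : Fin N → ℤ} {x : EuclideanSpace ℝ (Fin N)} :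
    x ∈ dyadicCube N j m ↔ ∀ i, |(m i : ℝ) - 2 ^ j * x i| ≤ 1 / 2 := by
  have h2j : (0 : ℝ) < 2 ^ j := by positivity
  simp only [dyadicCube, Set.mem_ofPred_eq, zpow_neg, zpow_natCast]
  refine forall_congr' fun i => ?_
  rw [show x i - (2 ^ j)⁻¹ * m i = (2 ^ j)⁻¹ * -((m i : ℝ) - 2 ^ j * x i) by field_simp; ring,
    abs_mul, abs_neg, abs_of_pos (inv_pos.2 h2j), div_eq_mul_one_div,
    mul_le_mul_iff_right₀ (inv_pos.2 h2j)]

lemma mem_dyadicCube_round {N j : ℕ} (x : EuclideanSpace ℝ (Fin N)) :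
    x ∈ dyadicCube N j (fun i => round (2 ^ j * x i)) :=
  mem_dyadicCube_iff.2 fun i => by rw [abs_sub_comm]; exact abs_sub_round _

lemma abs_sub_le_of_mem_dyadicCube {N j : ℕ} {m : Fin N → ℤ} {x y : EuclideanSpace ℝ (Fin N)}
    (hx : x ∈ dyadicCube N j m) (hy : y ∈ dyadicCube N j m) (i : Fin N) :
    2 ^ j * |x i - y i| ≤ 1 := by
  have hx := mem_dyadicCube_iff.1 hx i
  have hy := mem_dyadicCube_iff.1 hy i
  calc 2 ^ j * |x i - y i| = |2 ^ j * (x i - y i)| := by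
        rw [abs_mul, abs_of_pos (by positivity : (0 : ℝ) < 2 ^ j)]
    _ = |(m i - 2 ^ j * y i) - (m i - 2 ^ j * x i)| := by ring_nf
    _ ≤ 1 := by linarith [abs_sub (m i - 2 ^ j * y i : ℝ) (m i - 2 ^ j * x i)]

def dyadicIndices {N : ℕ} (E : Set (EuclideanSpace ℝ (Fin N))) (j : ℕ) : Set (Fin N → ℤ) :=
  {m | (dyadicCube N j m ∩ E).Nonempty}

lemma boxCount_eq_ncard {N : ℕ} (E : Set (EuclideanSpace ℝ (Fin N))) (j : ℕ) :
    boxCount E j = (dyadicIndices E j).ncard := rfl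

lemma boxCount_le_of_forall_exists_near {N j : ℕ} {E : Set (EuclideanSpace ℝ (Fin N))}
    (P : Finset (EuclideanSpace ℝ (Fin N))) {L : ℝ}
    (hE : ∀ z ∈ E, ∃ p ∈ P, ∀ i, 2 ^ j * |z i - p i| ≤ L) :
    boxCount E j ≤ P.card * (2 * ⌈L⌉₊ + 2) ^ N := by
  classical
  let box (p : EuclideanSpace ℝ (Fin N)) : Finset (Fin N → ℤ) :=
    latticeBox (fun i => 2 ^ j * p i) (⌈L⌉₊ + 1 / 2)
  have hcover : dyadicIndices E j ⊆ ↑(P.biUnion box) := by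
    rintro m ⟨z, hzm, hzE⟩
    obtain ⟨p, hpP, hzp⟩ := hE z hzE
    refine Finset.mem_biUnion.2 ⟨p, hpP, mem_latticeBox.2 fun i => ?_⟩
    have hm := mem_dyadicCube_iff.1 hzm i
    have hscale : |2 ^ j * z i - 2 ^ j * p i| ≤ ⌈L⌉₊ := by
      rw [← mul_sub, abs_mul, abs_of_pos (by positivity)]
      exact (hzp i).trans (Nat.le_ceil L)
    linarith [abs_sub_le (m i : ℝ) (2 ^ j * z i) (2 ^ j * p i)]
  calc boxCount E j ≤ (P.biUnion box).card := by
        rw [boxCount_eq_ncard, ← Set.ncard_coe_finset]; exact Set.ncard_le_ncard hcover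
    _ ≤ P.card * (2 * ⌈L⌉₊ + 2) ^ N :=
        Finset.card_biUnion_le_card_mul _ _ _ fun p _ =>
          card_latticeBox_le _ (by push_cast; linarith)

lemma exists_finset_near_of_finite_dyadicIndices {N j : ℕ} {E : Set (EuclideanSpace ℝ (Fin N))}
    (hE : (dyadicIndices E j).Finite) :
    ∃ P : Finset (EuclideanSpace ℝ (Fin N)), ↑P ⊆ E ∧ P.card ≤ boxCount E j ∧
      ∀ x ∈ E, ∃ p ∈ P, ∀ i, 2 ^ j * |x i - p i| ≤ 1 := by
  classical
  choose! w hw using fun m (hm : m ∈ dyadicIndices E j) => hm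
  refine ⟨hE.toFinset.image w, ?_, ?_, fun x hx => ?_⟩
  · intro p hp
    obtain ⟨m, hm, rfl⟩ := Finset.mem_image.1 hp
    exact (hw m (hE.mem_toFinset.1 hm)).2
  · rw [boxCount_eq_ncard, Set.ncard_eq_toFinset_card _ hE]
    exact Finset.card_image_le
  · have hx' : x ∈ dyadicCube N j _ := mem_dyadicCube_round x
    have hm : _ ∈ dyadicIndices E j := ⟨x, hx', hx⟩
    exact ⟨w _, Finset.mem_image_of_mem w (hE.mem_toFinset.2 hm),
      abs_sub_le_of_mem_dyadicCube hx' (hw _ hm).1⟩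

lemma card_mul_le_of_le_measure_closedBall {N j : ℕ} (μ : Measure (EuclideanSpace ℝ (Fin N)))
    {E : Set (EuclideanSpace ℝ (Fin N))} {a : ℝ≥0∞}
    (ha : ∀ x ∈ E, a ≤ μ (closedBall x (2 ^ j)⁻¹)) {F : Finset (Fin N → ℤ)}
    (hF : ↑F ⊆ dyadicIndices E j) :
    F.card * a ≤ 4 ^ N * μ univ := by
  classical
  choose! w hw using fun m (hm : m ∈ F) => hF hm
  let B m := closedBall (w m) ((2 : ℝ) ^ j)⁻¹
  have hoverlap : ∀ y, ∑ m ∈ F, (B m).indicator 1 y ≤ (4 : ℝ≥0∞) ^ N := by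
    intro y
    have hsub : F.filter (y ∈ B ·) ⊆ latticeBox (fun i => 2 ^ j * y i) (3 / 2) := by
      intro m hm
      obtain ⟨hmF, hy⟩ := Finset.mem_filter.1 hm
      refine mem_latticeBox.2 fun i => ?_
      have hcentre := mem_dyadicCube_iff.1 (hw m hmF).1 i
      have hdist : |2 ^ j * y i - 2 ^ j * w m i| ≤ 1 := by
        rw [← mul_sub, abs_mul, abs_of_pos (by positivity : (0 : ℝ) < 2 ^ j), ← Real.dist_eq]
        calc 2 ^ j * dist (y i) (w m i) ≤ 2 ^ j * ((2 : ℝ) ^ j)⁻¹ := by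
              gcongr; exact (PiLp.dist_apply_le y (w m) i).trans (mem_closedBall.1 hy)
          _ = 1 := mul_inv_cancel₀ (by positivity)
      linarith [abs_sub_le (m i : ℝ) (2 ^ j * w m i) (2 ^ j * y i),
        abs_sub_comm (2 ^ j * w m i) (2 ^ j * y i)]
    have hcard := (Finset.card_le_card hsub).trans (card_latticeBox_le _ (A := 3) (by norm_num))
    calc ∑ m ∈ F, (B m).indicator 1 y = ((F.filter (y ∈ B ·)).card : ℝ≥0∞) := by
          simp only [Set.indicator_apply, Pi.one_apply, Finset.card_filter, Nat.cast_sum,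
            Nat.cast_ite, Nat.cast_one, Nat.cast_zero]
      _ ≤ (4 : ℝ≥0∞) ^ N := by exact_mod_cast hcard
  calc F.card * a = ∑ m ∈ F, a := by rw [Finset.sum_const, nsmul_eq_mul]
    _ ≤ ∑ m ∈ F, μ (B m) := Finset.sum_le_sum fun m hm => ha _ (hw m hm).2
    _ = ∫⁻ y, ∑ m ∈ F, (B m).indicator 1 y ∂μ := by
        rw [lintegral_finsetSum _ fun m _ => measurable_one.indicator measurableSet_closedBall]
        exact Finset.sum_congr rfl fun m _ =>
          (lintegral_indicator_one measurableSet_closedBall).symm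
    _ ≤ ∫⁻ _, 4 ^ N ∂μ := lintegral_mono hoverlap
    _ = 4 ^ N * μ univ := lintegral_const _

lemma finite_dyadicIndices_of_le_measure_closedBall {N j : ℕ}
    (μ : Measure (EuclideanSpace ℝ (Fin N))) {E : Set (EuclideanSpace ℝ (Fin N))} {a : ℝ≥0∞}
    (ha : ∀ x ∈ E, a ≤ μ (closedBall x (2 ^ j)⁻¹)) (ha₀ : a ≠ 0) (hμ : μ univ ≠ ∞) :
    (dyadicIndices E j).Finite := by
  by_contra hinf
  obtain ⟨k, hk⟩ := exists_nat_mul_gt ha₀ (mul_ne_top (pow_ne_top (ofNat_ne_top (n := 4))) hμ)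
  obtain ⟨F, hF, rfl⟩ := Set.not_finite.1 hinf |>.exists_subset_card_eq k
  exact (card_mul_le_of_le_measure_closedBall μ ha hF).not_gt hk

lemma IsDSet.exists_boxCount_le {n : ℕ} {d : ℝ} {μ : Measure (EuclideanSpace ℝ (Fin n))}
    {K : Set (EuclideanSpace ℝ (Fin n))} (hK : IsDSet d μ K) :
    ∃ C : ℝ, 0 ≤ C ∧
      ∀ j : ℕ, (dyadicIndices K j).Finite ∧ (boxCount K j : ℝ) ≤ C * 2 ^ (j * d) := by
  obtain ⟨-, -, -, -, hμ, c₁, _, hc₁, -, hmass⟩ := hK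
  refine ⟨4 ^ n * μ.real univ / c₁, by positivity, fun j => ?_⟩
  set ρ : ℝ := (2 ^ j)⁻¹
  have hρ : ρ ∈ Ioc (0 : ℝ) 1 := ⟨by positivity, inv_le_one_of_one_le₀ (one_le_pow₀ one_le_two)⟩
  have hρd : ρ ^ d = (2 ^ (j * d))⁻¹ := inv_two_pow_rpow j d
  have hlower : ∀ x ∈ K, ENNReal.ofReal (c₁ * ρ ^ d) ≤ μ (closedBall x ρ) :=
    fun x hx => (hmass ρ hρ x hx).1
  have hfin := finite_dyadicIndices_of_le_measure_closedBall μ hlower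
    (by rw [ne_eq, ofReal_eq_zero, not_le, hρd]; positivity) hμ.ne
  refine ⟨hfin, ?_⟩
  have hmeasure := card_mul_le_of_le_measure_closedBall μ hlower (F := hfin.toFinset) (by simp)
  rw [← Set.ncard_eq_toFinset_card _ hfin, ← boxCount_eq_ncard] at hmeasure
  have hreal := toReal_mono (mul_ne_top (pow_ne_top (ofNat_ne_top (n := 4))) hμ.ne) hmeasure
  rw [toReal_mul, toReal_mul, toReal_ofReal (by positivity), toReal_natCast, toReal_pow,
    toReal_ofNat, ← measureReal_def, hρd] at hreal
  rw [div_mul_eq_mul_div, le_div_iff₀ hc₁]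
  calc (boxCount K j : ℝ) * c₁ = boxCount K j * (c₁ * (2 ^ (j * d))⁻¹) * 2 ^ (j * d) := by
        field_simp
    _ ≤ 4 ^ n * μ.real univ * 2 ^ (j * d) := by gcongr

def graphPoint {n : ℕ} (f : EuclideanSpace ℝ (Fin n) → ℝ) (x : EuclideanSpace ℝ (Fin n)) :
    EuclideanSpace ℝ (Fin (n + 1)) :=
  (EuclideanSpace.equiv (Fin (n + 1)) ℝ).symm (Fin.snoc (EuclideanSpace.equiv (Fin n) ℝ x) (f x))

lemma graphOn_eq_image {n : ℕ} (K : Set (EuclideanSpace ℝ (Fin n)))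
    (f : EuclideanSpace ℝ (Fin n) → ℝ) : graphOn K f = graphPoint f '' K := rfl

@[simp]
lemma graphPoint_castSucc {n : ℕ} (f : EuclideanSpace ℝ (Fin n) → ℝ)
    (x : EuclideanSpace ℝ (Fin n)) (k : Fin n) : graphPoint f x k.castSucc = x k := by
  simp [graphPoint, EuclideanSpace.equiv]

@[simp]
lemma graphPoint_last {n : ℕ} (f : EuclideanSpace ℝ (Fin n) → ℝ) (x : EuclideanSpace ℝ (Fin n)) :
    graphPoint f x (Fin.last n) = f x := by
  simp [graphPoint, EuclideanSpace.equiv]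

lemma two_pow_mul_abs_sub_le_of_holder {n : ℕ} {K : Set (EuclideanSpace ℝ (Fin n))}
    {f : EuclideanSpace ℝ (Fin n) → ℝ} {c s : ℝ} (hc : 0 ≤ c) (hs : 0 < s)
    (hf : ∀ x ∈ K, ∀ y ∈ K, |f x - f y| ≤ c * dist x y ^ s) {j j' : ℕ} (hj : (j : ℝ) ≤ s * j')
    {x y : EuclideanSpace ℝ (Fin n)} (hx : x ∈ K) (hy : y ∈ K)
    (hxy : ∀ i, 2 ^ j' * |x i - y i| ≤ 1) :
    2 ^ j * |f x - f y| ≤ c * √n ^ s := by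
  have hdist : dist x y ≤ √n * (2 ^ j')⁻¹ :=
    dist_le_sqrt_card_mul_of_abs_sub_le (by positivity) fun i =>
      ((le_inv_mul_iff₀ (by positivity)).2 (hxy i)).trans_eq (mul_one _)
  have hscale : (2 : ℝ) ^ j * ((2 : ℝ) ^ j')⁻¹ ^ s ≤ 1 := by
    rw [inv_two_pow_rpow, ← Real.rpow_natCast, mul_comm (j' : ℝ)]
    exact mul_inv_le_one_of_le₀ (Real.rpow_le_rpow_of_exponent_le one_le_two hj) (by positivity)
  calc 2 ^ j * |f x - f y| ≤ 2 ^ j * (c * (√n * (2 ^ j')⁻¹) ^ s) := by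
        gcongr; exact (hf x hx y hy).trans (by gcongr)
    _ = c * √n ^ s * (2 ^ j * ((2 : ℝ) ^ j')⁻¹ ^ s) := by
        rw [Real.mul_rpow (by positivity) (by positivity)]; ring
    _ ≤ c * √n ^ s := mul_le_of_le_one_right (by positivity) hscale

lemma boxCount_graphOn_le_of_holder {n : ℕ} {K : Set (EuclideanSpace ℝ (Fin n))}
    {f : EuclideanSpace ℝ (Fin n) → ℝ} {c s : ℝ} (hc : 0 ≤ c) (hs₀ : 0 < s) (hs₁ : s ≤ 1)
    (hf : ∀ x ∈ K, ∀ y ∈ K, |f x - f y| ≤ c * dist x y ^ s) {j j' : ℕ} (hj : (j : ℝ) ≤ s * j')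
    (hK : (dyadicIndices K j').Finite) :
    boxCount (graphOn K f) j ≤ boxCount K j' * (2 * ⌈max 1 (c * √n ^ s)⌉₊ + 2) ^ (n + 1) := by
  classical
  obtain ⟨P, hPK, hcard, hnear⟩ := exists_finset_near_of_finite_dyadicIndices hK
  have hjj' : j ≤ j' := by
    exact_mod_cast hj.trans (mul_le_of_le_one_left (Nat.cast_nonneg j') hs₁)
  refine (boxCount_le_of_forall_exists_near (P.image (graphPoint f))
    (L := max 1 (c * √n ^ s)) ?_).trans ?_
  · rw [graphOn_eq_image]
    rintro _ ⟨x, hx, rfl⟩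
    obtain ⟨p, hp, hxp⟩ := hnear x hx
    refine ⟨graphPoint f p, Finset.mem_image_of_mem _ hp, Fin.lastCases ?_ fun k => ?_⟩
    · rw [graphPoint_last, graphPoint_last]
      exact (two_pow_mul_abs_sub_le_of_holder hc hs₀ hf hj hx (hPK hp) hxp).trans
        (le_max_right _ _)
    · rw [graphPoint_castSucc, graphPoint_castSucc]
      calc 2 ^ j * |x k - p k| ≤ 2 ^ j' * |x k - p k| := by gcongr; exact one_le_two
        _ ≤ max 1 (c * √n ^ s) := (hxp k).trans (le_max_left _ _)
  · gcongr
    exact Finset.card_image_le.trans hcard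

lemma upperBoxDim_le_of_boxCount_le {N : ℕ} {E : Set (EuclideanSpace ℝ (Fin N))} {a C : ℝ}
    (ha : 0 ≤ a) (h : ∀ j : ℕ, (boxCount E j : ℝ) ≤ C * 2 ^ (j * a)) : upperBoxDim E ≤ a := by
  set C' := max C 1
  have hC' : 0 ≤ Real.logb 2 C' := Real.logb_nonneg one_lt_two (le_max_right C 1)
  have hratio : ∀ j : ℕ, 1 ≤ j → Real.logb 2 (boxCount E j) / j ≤ a + Real.logb 2 C' / j := by
    intro j hj
    have hj₀ : (0 : ℝ) < j := by exact_mod_cast hj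
    rw [div_le_iff₀ hj₀, add_mul, div_mul_cancel₀ _ hj₀.ne']
    rcases (boxCount E j).eq_zero_or_pos with h₀ | hpos
    · rw [h₀, Nat.cast_zero, Real.logb_zero]
      positivity
    · calc Real.logb 2 (boxCount E j) ≤ Real.logb 2 (C' * 2 ^ (j * a)) :=
            Real.logb_le_logb_of_le one_lt_two (by exact_mod_cast hpos)
              ((h j).trans (by gcongr; exact le_max_left C 1))
        _ = a * j + Real.logb 2 C' := by
            rw [Real.logb_mul (by positivity) (by positivity), Real.logb_rpow two_pos
              (by norm_num)]
            ring
  have hnonneg : ∀ j : ℕ, 0 ≤ Real.logb 2 (boxCount E j) / j := fun j =>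
    div_nonneg (div_nonneg (Real.log_natCast_nonneg _) (Real.log_nonneg one_le_two)) j.cast_nonneg
  have hlim : Tendsto (fun j : ℕ => a + Real.logb 2 C' / j) atTop (nhds a) := by
    simpa using tendsto_const_nhds.add (tendsto_const_div_atTop_nhds_zero_nat (Real.logb 2 C'))
  calc upperBoxDim E ≤ limsup (fun j : ℕ => a + Real.logb 2 C' / j) atTop :=
        limsup_le_limsup (eventually_atTop.2 ⟨1, hratio⟩)
          (isCoboundedUnder_le_of_le atTop hnonneg) hlim.isBoundedUnder_le
    _ = a := hlim.limsup_eq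

theorem upperBoxDim_graph_le_div_of_holder_general {n : ℕ} (s : ℝ) (hs0 : 0 < s) (hs1 : s ≤ 1)
    (d : ℝ) (hd0 : 0 < d)
    (μ : Measure (EuclideanSpace ℝ (Fin n))) (K : Set (EuclideanSpace ℝ (Fin n)))
    (hK : IsDSet d μ K) (f : EuclideanSpace ℝ (Fin n) → ℝ)
    (hf : ∃ c : ℝ, 0 < c ∧ ∀ x ∈ K, ∀ y ∈ K, |f x - f y| ≤ c * dist x y ^ s) :
    upperBoxDim (graphOn K f) ≤ d / s := by
  obtain ⟨c, hc, hholder⟩ := hf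
  obtain ⟨C, hC, hcount⟩ := hK.exists_boxCount_le
  set B : ℕ := (2 * ⌈max 1 (c * √n ^ s)⌉₊ + 2) ^ (n + 1)
  refine upperBoxDim_le_of_boxCount_le (C := C * B * 2 ^ d) (div_pos hd0 hs0).le fun j => ?_
  set j' := ⌈j / s⌉₊
  have hj : (j : ℝ) ≤ s * j' := by rw [← div_le_iff₀' hs0]; exact Nat.le_ceil _
  have hj' : (j' : ℝ) * d ≤ j * (d / s) + d := by
    have := Nat.ceil_lt_add_one (by positivity : (0 : ℝ) ≤ j / s)
    rw [← mul_div_assoc, mul_div_right_comm, ← add_one_mul]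
    gcongr
  obtain ⟨hfin, hKj'⟩ := hcount j'
  calc (boxCount (graphOn K f) j : ℝ) ≤ boxCount K j' * B := by
        exact_mod_cast boxCount_graphOn_le_of_holder hc.le hs0 hs1 hholder hj hfin
    _ ≤ C * 2 ^ (j' * d) * B := by gcongr
    _ ≤ C * 2 ^ (j * (d / s) + d) * B := by gcongr; exact one_le_two
    _ = C * B * 2 ^ d * 2 ^ (j * (d / s)) := by rw [Real.rpow_add two_pos]; ring

/-- If `0 < s ≤ 1`, `K` is a `d`-set in `ℝⁿ` with `0 < d ≤ n`, and `f` is Hölder continuous of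
exponent `s` on `K`, then the upper box counting dimension of `Γ(f)` is at most `d / s`. -/
theorem upperBoxDim_graph_le_div_of_holder {n : ℕ} (s : ℝ) (hs0 : 0 < s) (hs1 : s ≤ 1)
    (d : ℝ) (hd0 : 0 < d) (hdn : d ≤ n)
    (μ : Measure (EuclideanSpace ℝ (Fin n))) (K : Set (EuclideanSpace ℝ (Fin n)))
    (hK : IsDSet d μ K) (f : EuclideanSpace ℝ (Fin n) → ℝ)
    (hf : ∃ c : ℝ, 0 < c ∧ ∀ x ∈ K, ∀ y ∈ K, |f x - f y| ≤ c * dist x y ^ s) :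
    upperBoxDim (graphOn K f) ≤ d / s :=
  upperBoxDim_graph_le_div_of_holder_general s hs0 hs1 d hd0 μ K hK f hf
end
end
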